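/- arXiv:1612.06476 — 2 statements merged into one kernel-verified Lean document; each statement's English description precedes it below -/
import Mathlib

section
/- In the reduction instance: suppose the bipartite graph (L, R, E) contains an ℓ-by-ℓ biclique (L', R') with |L'| = |R'| = ℓ. Then the committee W = C₁ ∪ X (with X ⊆ C₂, |X| = ℓ−1) fails ℓ-PJR for (A⃗, k) with k = 2ℓ−2: the voter set N* = R' ∪ N₁ satisfies |N*| = ℓ(s+1) = ℓ·n/k, every voter in N* approves every candidate in L' (so |⋂_{i∈N*} A_i| ≥ ℓ), but |W ∩ (⋃_{i∈N*} A_i)| = ℓ−1 < ℓ. -/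
open Finset

/-- Forward direction of the reduction: if the bipartite graph contains an
ℓ-by-ℓ biclique, then the committee W = C₁ ∪ X fails ℓ-PJR, witnessed by
N* = R' ∪ N₁ with |N*| = ℓ(s+1) = ℓ·n/k, common approval set of size ≥ ℓ,
but only ℓ−1 committee members in its union of ballots. -/
theorem reduction_biclique_implies_pjr_failure
    {V C : Type*} [Fintype V] [Fintype C] [DecidableEq V] [DecidableEq C]
    (s ℓ : ℕ) (hs : 3 ≤ s) (hℓ : 3 ≤ ℓ)
    (N0 N1 N2 : Finset V) (C0 C1 C2 : Finset C)
    (hVpart : N0 ∪ N1 ∪ N2 = univ)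
    (hN01 : Disjoint N0 N1) (hN02 : Disjoint N0 N2) (hN12 : Disjoint N1 N2)
    (hCpart : C0 ∪ C1 ∪ C2 = univ)
    (hC01 : Disjoint C0 C1) (hC02 : Disjoint C0 C2) (hC12 : Disjoint C1 C2)
    (hN0card : N0.card = s)
    (hN1card : N1.card = ℓ * (s - 1) + ℓ)
    (hN2card : N2.card = s * ℓ + ℓ - 3 * s + (ℓ - 2))
    (hC1card : C1.card = ℓ - 1)
    (hC2card : C2.card = s * ℓ + ℓ - 3 * s + (ℓ - 2))
    (A : V → Finset C)
    (hA0 : ∀ i ∈ N0, A i ⊆ C0)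
    (hA1 : ∀ i ∈ N1, A i = C0 ∪ C1)
    (hA2 : ∀ i ∈ N2, ∃ c ∈ C2, A i = {c})
    (hA2inj : ∀ i ∈ N2, ∀ j ∈ N2, A i = A j → i = j)
    (k : ℕ) (hk : k = 2 * ℓ - 2)
    (X : Finset C) (hX : X ⊆ C2) (hXcard : X.card = ℓ - 1)
    (W : Finset C) (hWdef : W = C1 ∪ X)
    -- the ℓ-by-ℓ biclique (L', R'): L' ⊆ C₀ = L, R' ⊆ N₀ = R, all edges present
    (L' : Finset C) (R' : Finset V)
    (hL' : L' ⊆ C0) (hR' : R' ⊆ N0)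
    (hL'card : L'.card = ℓ) (hR'card : R'.card = ℓ)
    (hedges : ∀ i ∈ R', L' ⊆ A i) :
    ∃ Nstar : Finset V,
      Nstar = R' ∪ N1 ∧
      Nstar.card = ℓ * (s + 1) ∧
      ((Nstar.card : ℚ) = (ℓ * Fintype.card V : ℚ) / k) ∧
      ℓ ≤ (univ.filter fun c => ∀ i ∈ Nstar, c ∈ A i).card ∧
      (W ∩ Nstar.biUnion A).card = ℓ - 1 ∧
      ℓ - 1 < ℓ := by
  have hdisj : Disjoint R' N1 := hN01.mono_left hR'
  have hcard : (R' ∪ N1).card = ℓ * (s + 1) := by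
    rw [card_union_of_disjoint hdisj, hR'card, hN1card]
    have h : s - 1 + 1 = s := by omega
    rw [← Nat.mul_succ, Nat.succ_eq_add_one, h]; ring
  have hN1ne : N1.Nonempty := by
    rw [← card_pos, hN1card]; omega
  -- total number of voters
  have hn : Fintype.card V = (s + 1) * k := by
    have h1 : Disjoint (N0 ∪ N1) N2 := disjoint_union_left.2 ⟨hN02, hN12⟩
    have : Fintype.card V = (N0 ∪ N1 ∪ N2).card := by rw [hVpart, card_univ]
    rw [this, card_union_of_disjoint h1, card_union_of_disjoint hN01,
      hN0card, hN1card, hN2card, hk]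
    have hmul : ℓ * (s - 1) + ℓ = ℓ * s := by
      have h : s - 1 + 1 = s := by omega
      rw [← Nat.mul_succ, Nat.succ_eq_add_one, h]
    rw [hmul]
    have c1 : 3 * s ≤ s * ℓ + ℓ := by nlinarith
    have c2 : 2 ≤ ℓ := by omega
    have c3 : 2 ≤ 2 * ℓ := by omega
    zify [c1, c2, c3]
    ring
  have hkpos : 0 < k := by omega
  -- W ∩ biUnion = C1
  have hinter : W ∩ (R' ∪ N1).biUnion A = C1 := by
    apply subset_antisymm
    · intro c hc
      obtain ⟨hcW, hcB⟩ := mem_inter.1 hc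
      obtain ⟨i, hi, hci⟩ := mem_biUnion.1 hcB
      have hcnot0 : c ∈ C0 → False := by
        intro hc0
        rw [hWdef, mem_union] at hcW
        rcases hcW with h | h
        · exact disjoint_left.1 hC01 hc0 h
        · exact disjoint_left.1 hC02 hc0 (hX h)
      rcases mem_union.1 hi with hi | hi
      · exact absurd (hA0 i (hR' hi) hci) hcnot0
      · rw [hA1 i hi, mem_union] at hci
        rcases hci with h | h
        · exact absurd h hcnot0
        · exact h
    · intro c hc
      refine mem_inter.2 ⟨by rw [hWdef]; exact mem_union_left _ hc, ?_⟩
      obtain ⟨i, hi⟩ := hN1ne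
      exact mem_biUnion.2 ⟨i, mem_union_right _ hi, by
        rw [hA1 i hi]; exact mem_union_right _ hc⟩
  refine ⟨R' ∪ N1, rfl, hcard, ?_, ?_, ?_, by omega⟩
  · rw [hcard, hn]
    push_cast
    field_simp
  · have hsub : L' ⊆ univ.filter fun c => ∀ i ∈ R' ∪ N1, c ∈ A i := by
      intro c hc
      refine mem_filter.2 ⟨mem_univ _, fun i hi => ?_⟩
      rcases mem_union.1 hi with hi | hi
      · exact hedges i hi hc
      · rw [hA1 i hi]; exact mem_union_left _ (hL' hc)
    calc ℓ = L'.card := hL'card.symm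
      _ ≤ _ := card_le_card hsub
  · rw [hinter, hC1card]
end

section
/- In the reduction instance: if the committee W = C₁ ∪ X (with X ⊆ C₂, |X| = ℓ−1) fails PJR for (A⃗, k), then the bipartite graph (L, R, E) contains an ℓ-by-ℓ biclique. Specifically, any witnessing voter set N* (with |N*| = j(s+1), |⋂_{i∈N*} A_i| ≥ j, |W ∩ ⋃_{i∈N*} A_i| < j for some j ≥ 1) satisfies: N* ∩ N₂ = ∅, N* contains a voter of N₁, j ≥ ℓ, |N* ∩ N₀| ≥ ℓ, and ⋂_{i∈N*} A_i ⊆ C₀; choosing ℓ voters of N* ∩ N₀ and ℓ candidates of ⋂_{i∈N*} A_i yields an ℓ-by-ℓ biclique in (L, R, E). -/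
/-!
A voter of `N₂` approves only its matched candidate, which nobody else approves, so it
shares no candidate with the other `≥ s + 1 ≥ 2` voters of `N*`; hence `N* ⊆ N₀ ∪ N₁`.
Since `|N*| > s = |N₀|`, some voter of `N*` lies in `N₁` and approves all of `C₁ ⊆ W`,
which forces `ℓ - 1 < j`. Then `|N* ∩ N₀| ≥ j (s + 1) - |N₁| ≥ ℓ (s + 1) - ℓ s = ℓ`, and
any voter of `N* ∩ N₀` confines the common approvals to `C₀`; picking `ℓ` of them and `ℓ`
commonly approved candidates gives the biclique.
-/

open Finset

lemma card_le_card_inter_add_card {V : Type*} [DecidableEq V] {S N N' : Finset V}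
    (h : S ⊆ N ∪ N') : S.card ≤ (S ∩ N).card + N'.card :=
  calc S.card ≤ (S ∩ N ∪ N').card := card_le_card fun _ hi =>
          (mem_union.mp (h hi)).elim (fun hN => mem_union_left _ (mem_inter.mpr ⟨hi, hN⟩))
            (mem_union_right _)
    _ ≤ (S ∩ N).card + N'.card := card_union_le _ _

section ApprovalProfile

variable {V C : Type*} [Fintype C] [DecidableEq C] {A : V → Finset C}

lemma filter_forall_mem_eq_inf (S : Finset V) (A : V → Finset C)
    [DecidablePred fun c => ∀ i ∈ S, c ∈ A i] :
    univ.filter (fun c => ∀ i ∈ S, c ∈ A i) = S.inf A := by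
  ext c
  simp [mem_inf]

lemma inf_eq_empty_of_private_singleton {S : Finset V} {i : V} {c : C}
    (hS : 1 < S.card) (hi : i ∈ S) (hAi : A i = {c}) (hc : ∀ i', c ∈ A i' → i' = i) :
    S.inf A = ∅ := by
  refine eq_empty_iff_forall_notMem.mpr fun d hd => ?_
  have hdc : d = c := mem_singleton.mp (hAi ▸ mem_inf.mp hd i hi)
  obtain ⟨i', hi', hne⟩ := exists_mem_ne hS i
  exact hne (hc i' (hdc ▸ mem_inf.mp hd i' hi'))

lemma exists_biclique_of_le_card_inf {S R : Finset V} {ℓ : ℕ} (hR : R ⊆ S)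
    (hL : ℓ ≤ (S.inf A).card) (hRℓ : ℓ ≤ R.card) :
    ∃ (L' : Finset C) (R' : Finset V), L' ⊆ S.inf A ∧ R' ⊆ R ∧
      L'.card = ℓ ∧ R'.card = ℓ ∧ ∀ i ∈ R', L' ⊆ A i := by
  obtain ⟨L', hL', rfl⟩ := exists_subset_card_eq hL
  obtain ⟨R', hR', hR'card⟩ := exists_subset_card_eq hRℓ
  exact ⟨L', R', hL', hR', rfl, hR'card, fun i hi => hL'.trans (inf_le (hR (hR' hi)))⟩

end ApprovalProfile

lemma eq_of_approves_matched_candidate {V C : Type*} [Fintype V] [DecidableEq V]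
    [DecidableEq C]
    {N0 N1 N2 : Finset V} {C0 C1 C2 : Finset C} (hVpart : N0 ∪ N1 ∪ N2 = univ)
    (hC02 : Disjoint C0 C2) (hC12 : Disjoint C1 C2) {A : V → Finset C}
    (hA0 : ∀ i ∈ N0, A i ⊆ C0) (hA1 : ∀ i ∈ N1, A i = C0 ∪ C1)
    (hA2 : ∀ i ∈ N2, ∃ c ∈ C2, A i = {c})
    (hA2inj : ∀ i ∈ N2, ∀ j ∈ N2, A i = A j → i = j)
    {i : V} {c : C} (hi : i ∈ N2) (hc : c ∈ C2) (hAi : A i = {c}) :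
    ∀ i', c ∈ A i' → i' = i := by
  intro i' hci'
  have hi' : i' ∈ N0 ∪ N1 ∪ N2 := hVpart ▸ mem_univ i'
  rcases mem_union.mp hi' with hi01 | hi2
  · exfalso
    rcases mem_union.mp hi01 with hi0 | hi1
    · exact disjoint_left.mp hC02 (hA0 i' hi0 hci') hc
    · rcases mem_union.mp (hA1 i' hi1 ▸ hci') with hc0 | hc1
      · exact disjoint_left.mp hC02 hc0 hc
      · exact disjoint_left.mp hC12 hc1 hc
  · obtain ⟨c', -, hAi'⟩ := hA2 i' hi2
    have hc' : c' = c := (mem_singleton.mp (hAi' ▸ hci')).symm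
    exact hA2inj i' hi2 i hi (by rw [hAi', hAi, hc'])

theorem reduction_pjr_failure_implies_biclique_general
    {V C : Type*} [Fintype V] [Fintype C] [DecidableEq V] [DecidableEq C]
    (s ℓ : ℕ) (hs : 3 ≤ s) (hℓ : 3 ≤ ℓ)
    (N0 N1 N2 : Finset V) (C0 C1 C2 : Finset C)
    (hVpart : N0 ∪ N1 ∪ N2 = univ)
    (hC02 : Disjoint C0 C2) (hC12 : Disjoint C1 C2)
    (hN0card : N0.card = s)
    (hN1card : N1.card = ℓ * (s - 1) + ℓ)
    (hC1card : C1.card = ℓ - 1)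
    (A : V → Finset C)
    (hA0 : ∀ i ∈ N0, A i ⊆ C0)
    (hA1 : ∀ i ∈ N1, A i = C0 ∪ C1)
    (hA2 : ∀ i ∈ N2, ∃ c ∈ C2, A i = {c})
    (hA2inj : ∀ i ∈ N2, ∀ j ∈ N2, A i = A j → i = j)
    (X : Finset C)
    (W : Finset C) (hWdef : W = C1 ∪ X) :
    ∀ (j : ℕ) (Nstar : Finset V),
      1 ≤ j →
      Nstar.card = j * (s + 1) →
      j ≤ (univ.filter fun c => ∀ i ∈ Nstar, c ∈ A i).card →
      (W ∩ Nstar.biUnion A).card < j →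
      Nstar ∩ N2 = ∅ ∧
      (∃ i ∈ Nstar, i ∈ N1) ∧
      ℓ ≤ j ∧
      ℓ ≤ (Nstar ∩ N0).card ∧
      (univ.filter fun c => ∀ i ∈ Nstar, c ∈ A i) ⊆ C0 ∧
      ∃ (L' : Finset C) (R' : Finset V),
        L' ⊆ (univ.filter fun c => ∀ i ∈ Nstar, c ∈ A i) ∧
        R' ⊆ Nstar ∩ N0 ∧
        L'.card = ℓ ∧ R'.card = ℓ ∧
        ∀ i ∈ R', L' ⊆ A i := by
  intro j S hj hS hT hW
  rw [filter_forall_mem_eq_inf] at hT ⊢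
  have hS_big : s + 1 ≤ S.card := hS ▸ Nat.le_mul_of_pos_left _ hj
  have hS2 : S ∩ N2 = ∅ := by
    by_contra hne
    obtain ⟨i, hi⟩ := nonempty_iff_ne_empty.mpr hne
    obtain ⟨hiS, hi2⟩ := mem_inter.mp hi
    obtain ⟨c, hc, hAi⟩ := hA2 i hi2
    have hempty := inf_eq_empty_of_private_singleton (by omega) hiS hAi
      (eq_of_approves_matched_candidate hVpart hC02 hC12 hA0 hA1 hA2 hA2inj hi2 hc hAi)
    rw [hempty, card_empty] at hT
    omega
  have hS01 : S ⊆ N0 ∪ N1 := fun i hi =>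
    (mem_union.mp (hVpart ▸ mem_univ i : i ∈ N0 ∪ N1 ∪ N2)).resolve_right fun hi2 =>
      notMem_empty i (hS2 ▸ mem_inter.mpr ⟨hi, hi2⟩)
  obtain ⟨i1, hi1S, hi1⟩ : ∃ i ∈ S, i ∈ N1 := by
    obtain ⟨i, hiS, hi0⟩ := exists_mem_notMem_of_card_lt_card (s := N0) (t := S) (by omega)
    exact ⟨i, hiS, (mem_union.mp (hS01 hiS)).resolve_left hi0⟩
  have hjℓ : ℓ ≤ j := by
    have hC1 : C1 ⊆ W ∩ S.biUnion A := fun c hc => mem_inter.mpr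
      ⟨hWdef ▸ mem_union_left X hc,
        mem_biUnion.mpr ⟨i1, hi1S, hA1 i1 hi1 ▸ mem_union_right C0 hc⟩⟩
    have := card_le_card hC1
    omega
  have hN0 : ℓ ≤ (S ∩ N0).card := by
    have hcover := card_le_card_inter_add_card hS01
    have hjs : ℓ * (s - 1) + ℓ + ℓ ≤ j * (s + 1) := by
      rw [show ℓ * (s - 1) + ℓ + ℓ = ℓ * (s + 1) by
        rw [show s + 1 = s - 1 + 2 by omega]; ring]
      exact Nat.mul_le_mul_right _ hjℓ
    omega
  obtain ⟨i0, hi0⟩ := card_pos.mp (by omega : 0 < (S ∩ N0).card)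
  have hC0 : S.inf A ⊆ C0 := (inf_le (mem_inter.mp hi0).1).trans (hA0 i0 (mem_inter.mp hi0).2)
  exact ⟨hS2, ⟨i1, hi1S, hi1⟩, hjℓ, hN0, hC0,
    exists_biclique_of_le_card_inf inter_subset_left (hjℓ.trans hT) hN0⟩

/-- Converse direction of the reduction: if the committee W = C₁ ∪ X fails
PJR, witnessed at some level j ≥ 1 by a voter set N*, then N* ∩ N₂ = ∅,
N* contains a voter of N₁, j ≥ ℓ, |N* ∩ N₀| ≥ ℓ, the common approval set of
N* lies in C₀, and choosing ℓ voters of N* ∩ N₀ together with ℓ commonly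
approved candidates yields an ℓ-by-ℓ biclique in the bipartite graph. -/
theorem reduction_pjr_failure_implies_biclique
    {V C : Type*} [Fintype V] [Fintype C] [DecidableEq V] [DecidableEq C]
    (s ℓ : ℕ) (hs : 3 ≤ s) (hℓ : 3 ≤ ℓ)
    (N0 N1 N2 : Finset V) (C0 C1 C2 : Finset C)
    (hVpart : N0 ∪ N1 ∪ N2 = univ)
    (hN01 : Disjoint N0 N1) (hN02 : Disjoint N0 N2) (hN12 : Disjoint N1 N2)
    (hCpart : C0 ∪ C1 ∪ C2 = univ)
    (hC01 : Disjoint C0 C1) (hC02 : Disjoint C0 C2) (hC12 : Disjoint C1 C2)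
    (hN0card : N0.card = s)
    (hN1card : N1.card = ℓ * (s - 1) + ℓ)
    (hN2card : N2.card = s * ℓ + ℓ - 3 * s + (ℓ - 2))
    (hC1card : C1.card = ℓ - 1)
    (hC2card : C2.card = s * ℓ + ℓ - 3 * s + (ℓ - 2))
    (A : V → Finset C)
    (hA0 : ∀ i ∈ N0, A i ⊆ C0)
    (hA1 : ∀ i ∈ N1, A i = C0 ∪ C1)
    (hA2 : ∀ i ∈ N2, ∃ c ∈ C2, A i = {c})
    (hA2inj : ∀ i ∈ N2, ∀ j ∈ N2, A i = A j → i = j)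
    (k : ℕ) (hk : k = 2 * ℓ - 2)
    (X : Finset C) (hX : X ⊆ C2) (hXcard : X.card = ℓ - 1)
    (W : Finset C) (hWdef : W = C1 ∪ X) :
    ∀ (j : ℕ) (Nstar : Finset V),
      1 ≤ j →
      Nstar.card = j * (s + 1) →
      j ≤ (univ.filter fun c => ∀ i ∈ Nstar, c ∈ A i).card →
      (W ∩ Nstar.biUnion A).card < j →
      Nstar ∩ N2 = ∅ ∧
      (∃ i ∈ Nstar, i ∈ N1) ∧
      ℓ ≤ j ∧
      ℓ ≤ (Nstar ∩ N0).card ∧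
      (univ.filter fun c => ∀ i ∈ Nstar, c ∈ A i) ⊆ C0 ∧
      ∃ (L' : Finset C) (R' : Finset V),
        L' ⊆ (univ.filter fun c => ∀ i ∈ Nstar, c ∈ A i) ∧
        R' ⊆ Nstar ∩ N0 ∧
        L'.card = ℓ ∧ R'.card = ℓ ∧
        ∀ i ∈ R', L' ⊆ A i :=
  reduction_pjr_failure_implies_biclique_general s ℓ hs hℓ N0 N1 N2 C0 C1 C2 hVpart hC02 hC12
    hN0card hN1card hC1card A hA0 hA1 hA2 hA2inj X W hWdef
end
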